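/- arXiv:2209.11418 — 6 statements merged into one kernel-verified Lean document; each statement's English description precedes it below -/
import Mathlib

section
/- (Tightness of the mixed-monotone decomposition.) Let n ∈ ℕ, let x̲ ≤ x̄ in Fin n → ℝ, let h : (Fin n → ℝ) → ℝ be differentiable on an open set containing Set.Icc x̲ x̄, and let S ⊆ Fin n be such that for all x ∈ Set.Icc x̲ x̄: ∂h/∂x_j (x) ≥ 0 for every j ∈ S and ∂h/∂x_j (x) ≤ 0 for every j ∉ S. Define v_min, v_max ∈ Fin n → ℝ by v_min j = x̲ j if j ∈ S and v_min j = x̄ j otherwise, and v_max j = x̄ j if j ∈ S and v_max j = x̲ j otherwise. Then for every x ∈ Set.Icc x̲ x̄, h v_min ≤ h x ≤ h v_max; that is, h attains its minimum over the box at v_min and its maximum at v_max. -/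
/-!
Along the segment from `a` to `b`, the mean value theorem gives `h b - h a = Dh(z) (b - a)` for
some `z` in the box, and `Dh(z) (b - a) = ∑ⱼ (b j - a j) ∂ⱼh(z)`. When `b` lies above `a` in the
orthant order of the sign pattern `S` (coordinates in `S` larger, the others smaller), every
term is a product of two numbers of equal sign, so `h a ≤ h b`. The vertex `v_min` lies below
every point of the box in this order and `v_max` above.
-/

variable {ι : Type*}

def OrthantLE (S : Set ι) (a b : ι → ℝ) : Prop :=
  ∀ j, (j ∈ S → a j ≤ b j) ∧ (j ∉ S → b j ≤ a j)

theorem mem_Icc_of_forall_eq_or_eq {xl xu v : ι → ℝ} (hle : xl ≤ xu)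
    (hv : ∀ j, v j = xl j ∨ v j = xu j) : v ∈ Set.Icc xl xu := by
  constructor <;> intro j <;> rcases hv j with hj | hj <;> simp [hj, hle j]

variable [Fintype ι] [DecidableEq ι]

theorem ContinuousLinearMap.apply_sub_nonneg_of_orthantLE {S : Set ι}
    (L : (ι → ℝ) →L[ℝ] ℝ)
    (hL : ∀ j, (j ∈ S → 0 ≤ L (Pi.single j 1)) ∧ (j ∉ S → L (Pi.single j 1) ≤ 0))
    {a b : ι → ℝ} (hab : OrthantLE S a b) : 0 ≤ L (b - a) := by
  rw [pi_eq_sum_univ' (b - a), map_sum]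
  refine Finset.sum_nonneg fun j _ => ?_
  rw [map_smul, smul_eq_mul, Pi.sub_apply]
  by_cases hj : j ∈ S
  · exact mul_nonneg (sub_nonneg.2 ((hab j).1 hj)) ((hL j).1 hj)
  · exact mul_nonneg_of_nonpos_of_nonpos (sub_nonpos.2 ((hab j).2 hj)) ((hL j).2 hj)

theorem le_of_orthantLE_of_fderiv_sign {h : (ι → ℝ) → ℝ} {s : Set (ι → ℝ)} {S : Set ι}
    (hs : Convex ℝ s) (hh : ∀ x ∈ s, DifferentiableAt ℝ h x)
    (hS : ∀ x ∈ s, ∀ j,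
      (j ∈ S → 0 ≤ fderiv ℝ h x (Pi.single j 1)) ∧ (j ∉ S → fderiv ℝ h x (Pi.single j 1) ≤ 0))
    {a b : ι → ℝ} (ha : a ∈ s) (hb : b ∈ s) (hab : OrthantLE S a b) : h a ≤ h b := by
  obtain ⟨z, hz, hmvt⟩ := domain_mvt (fun x hx => (hh x hx).hasFDerivAt.hasFDerivWithinAt) hs ha hb
  have hzs : z ∈ s := hs.segment_subset ha hb hz
  have := (fderiv ℝ h z).apply_sub_nonneg_of_orthantLE (hS z hzs) hab
  linarith

theorem stmt_3_general (n : ℕ) (xl xu : Fin n → ℝ)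
    (h : (Fin n → ℝ) → ℝ) (U : Set (Fin n → ℝ)) (hU : IsOpen U)
    (hXU : Set.Icc xl xu ⊆ U) (hh : DifferentiableOn ℝ h U)
    (S : Set (Fin n))
    (hS : ∀ x ∈ Set.Icc xl xu, ∀ j,
      (j ∈ S → 0 ≤ fderiv ℝ h x (Pi.single j 1)) ∧
      (j ∉ S → fderiv ℝ h x (Pi.single j 1) ≤ 0))
    (vmin vmax : Fin n → ℝ)
    (hvmin : ∀ j, (j ∈ S → vmin j = xl j) ∧ (j ∉ S → vmin j = xu j))
    (hvmax : ∀ j, (j ∈ S → vmax j = xu j) ∧ (j ∉ S → vmax j = xl j)) :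
    ∀ x ∈ Set.Icc xl xu, h vmin ≤ h x ∧ h x ≤ h vmax := by
  intro x hx
  have hle : xl ≤ xu := hx.1.trans hx.2
  have hdiff : ∀ y ∈ Set.Icc xl xu, DifferentiableAt ℝ h y :=
    fun y hy => hh.differentiableAt (hU.mem_nhds (hXU hy))
  have hvmin_mem : vmin ∈ Set.Icc xl xu := mem_Icc_of_forall_eq_or_eq hle fun j => by
    by_cases hj : j ∈ S
    exacts [.inl ((hvmin j).1 hj), .inr ((hvmin j).2 hj)]
  have hvmax_mem : vmax ∈ Set.Icc xl xu := mem_Icc_of_forall_eq_or_eq hle fun j => by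
    by_cases hj : j ∈ S
    exacts [.inr ((hvmax j).1 hj), .inl ((hvmax j).2 hj)]
  have hvmin_le : OrthantLE S vmin x := fun j =>
    ⟨fun hj => ((hvmin j).1 hj).trans_le (hx.1 j), fun hj => ((hvmin j).2 hj) ▸ hx.2 j⟩
  have hle_vmax : OrthantLE S x vmax := fun j =>
    ⟨fun hj => ((hvmax j).1 hj) ▸ hx.2 j, fun hj => ((hvmax j).2 hj).trans_le (hx.1 j)⟩
  exact ⟨le_of_orthantLE_of_fderiv_sign (convex_Icc xl xu) hdiff hS hvmin_mem hx hvmin_le,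
    le_of_orthantLE_of_fderiv_sign (convex_Icc xl xu) hdiff hS hx hvmax_mem hle_vmax⟩

/-- Tightness of the mixed-monotone decomposition: if `h` is differentiable on an open
set containing the box `[x̲, x̄]` and its partial derivatives are nonnegative on the box
for `j ∈ S` and nonpositive for `j ∉ S`, then `h` attains its minimum over the box at
the vertex `v_min` (with `v_min j = x̲ j` for `j ∈ S`, `x̄ j` otherwise) and its maximum
at `v_max` (with `v_max j = x̄ j` for `j ∈ S`, `x̲ j` otherwise). -/
theorem stmt_3 (n : ℕ) (xl xu : Fin n → ℝ) (hle : xl ≤ xu)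
    (h : (Fin n → ℝ) → ℝ) (U : Set (Fin n → ℝ)) (hU : IsOpen U)
    (hXU : Set.Icc xl xu ⊆ U) (hh : DifferentiableOn ℝ h U)
    (S : Set (Fin n))
    (hS : ∀ x ∈ Set.Icc xl xu, ∀ j,
      (j ∈ S → 0 ≤ fderiv ℝ h x (Pi.single j 1)) ∧
      (j ∉ S → fderiv ℝ h x (Pi.single j 1) ≤ 0))
    (vmin vmax : Fin n → ℝ)
    (hvmin : ∀ j, (j ∈ S → vmin j = xl j) ∧ (j ∉ S → vmin j = xu j))
    (hvmax : ∀ j, (j ∈ S → vmax j = xu j) ∧ (j ∉ S → vmax j = xl j)) :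
    ∀ x ∈ Set.Icc xl xu, h vmin ≤ h x ∧ h x ≤ h vmax :=
  stmt_3_general n xl xu h U hU hXU hh S hS vmin vmax hvmin hvmax
end

section
/- (Mixed-monotone inclusion function.) Let n ∈ ℕ, let x̲ ≤ x̄ in Fin n → ℝ, and let g : (Fin n → ℝ) → ℝ be differentiable on an open set containing Set.Icc x̲ x̄ with J̲ j ≤ ∂g/∂x_j (x) ≤ J̄ j for all x ∈ Set.Icc x̲ x̄ and all j. Let m : Fin n → ℝ satisfy m j ∈ {J̲ j, J̄ j} for each j, set h x = g x − ∑ j, m j * x j, let S = { j | m j = J̲ j }, and define v_min j = x̲ j if j ∈ S and x̄ j otherwise, v_max j = x̄ j if j ∈ S and x̲ j otherwise. Then for every x ∈ Set.Icc x̲ x̄: h v_min + ∑ j, (m⁺ j * x̲ j − m⁻ j * x̄ j) ≤ g x ≤ h v_max + ∑ j, (m⁺ j * x̄ j − m⁻ j * x̲ j). In other words, the image g(Set.Icc x̲ x̄) is contained in the closed interval with these endpoints. -/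
theorem key_mono (n : ℕ) (xl xu : Fin n → ℝ) (g h : (Fin n → ℝ) → ℝ)
    (U : Set (Fin n → ℝ)) (hU : IsOpen U) (hXU : Set.Icc xl xu ⊆ U)
    (hg : DifferentiableOn ℝ g U) (m : Fin n → ℝ)
    (hdef : ∀ x, h x = g x - ∑ j, m j * x j)
    (a b : Fin n → ℝ) (ha : a ∈ Set.Icc xl xu) (hb : b ∈ Set.Icc xl xu)
    (hpos : ∀ p ∈ Set.Icc xl xu, ∀ j,
      0 ≤ (b j - a j) * (fderiv ℝ g p (Pi.single j 1) - m j)) :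
    h a ≤ h b := by
  classical
  set L : (Fin n → ℝ) →L[ℝ] ℝ := ∑ j, m j • (ContinuousLinearMap.proj j) with hLdef
  have hLapp : ∀ v, L v = ∑ j, m j * v j := by
    intro v
    simp [hLdef, ContinuousLinearMap.sum_apply]
  have hh : ∀ y ∈ U, HasFDerivAt h (fderiv ℝ g y - L) y := by
    intro y hy
    have hgy : HasFDerivAt g (fderiv ℝ g y) y :=
      (hg.differentiableAt (hU.mem_nhds hy)).hasFDerivAt
    have heq : h = fun x => g x - L x := funext fun x => by rw [hdef, hLapp]
    rw [heq]
    exact hgy.sub L.hasFDerivAt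
  set c : Fin n → ℝ := b - a with hcdef
  set γ : ℝ → (Fin n → ℝ) := fun t => a + t • c with hγdef
  have hγeq : ∀ t : ℝ, γ t = (1 - t) • a + t • b := by
    intro t; funext j
    simp [hγdef, hcdef]
    ring
  have hγmem : ∀ t ∈ Set.Icc (0:ℝ) 1, γ t ∈ Set.Icc xl xu := by
    intro t ht
    rw [hγeq]
    exact (convex_Icc xl xu) ha hb (by linarith [ht.2]) ht.1 (by ring)
  have hφ : ∀ t ∈ Set.Icc (0:ℝ) 1,
      HasDerivAt (h ∘ γ) ((fderiv ℝ g (γ t) - L) c) t := by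
    intro t ht
    have h1 : HasDerivAt γ c t := by
      have h2 : HasDerivAt (fun y : ℝ => y • c) ((1:ℝ) • c) t :=
        (hasDerivAt_id t).smul_const c
      simpa [hγdef] using h2.const_add a
    exact (hh (γ t) (hXU (hγmem t ht))).comp_hasDerivAt t h1
  have hsum : ∀ p ∈ Set.Icc xl xu, (fderiv ℝ g p) c = ∑ j, c j * fderiv ℝ g p (Pi.single j 1) := by
    intro p _
    have hc : c = ∑ j, c j • (Pi.single j (1:ℝ) : Fin n → ℝ) := by
      funext k
      simp [Finset.sum_apply, Pi.single_apply]
    conv_lhs => rw [hc]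
    simp [map_sum, map_smul, smul_eq_mul]
  have mono : MonotoneOn (h ∘ γ) (Set.Icc 0 1) := by
    apply monotoneOn_of_deriv_nonneg (convex_Icc 0 1)
    · exact fun t ht => (hφ t ht).continuousAt.continuousWithinAt
    · intro t ht
      rw [interior_Icc] at ht
      exact ((hφ t (Set.mem_Icc_of_Ioo ht)).differentiableAt).differentiableWithinAt
    · intro t ht
      rw [interior_Icc] at ht
      have ht' := Set.mem_Icc_of_Ioo ht
      rw [(hφ t ht').deriv]
      set p := γ t with hp
      have hpmem : p ∈ Set.Icc xl xu := hγmem t ht'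
      have e2 : ∑ j, (b j - a j) * (fderiv ℝ g p (Pi.single j 1) - m j)
          = (∑ j, c j * fderiv ℝ g p (Pi.single j 1)) - ∑ j, m j * c j := by
        rw [← Finset.sum_sub_distrib]
        apply Finset.sum_congr rfl
        intro j _
        simp [hcdef]
        ring
      have h3 := Finset.sum_nonneg (fun j (_ : j ∈ Finset.univ) => hpos p hpmem j)
      rw [e2] at h3
      simpa [ContinuousLinearMap.sub_apply, hsum p hpmem, hLapp] using h3
  have h0 : γ 0 = a := by simp [hγdef]
  have h1 : γ 1 = b := by funext j; simp [hγdef, hcdef]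
  have := mono (Set.left_mem_Icc.2 zero_le_one) (Set.right_mem_Icc.2 zero_le_one) zero_le_one
  simpa [Function.comp, h0, h1] using this
/-- Mixed-monotone inclusion function: with the JSS decomposition
`g x = h x + ∑ j, m j * x j`, `S = {j | m j = J̲ j}`, and vertices `v_min`, `v_max`
of the box `[x̲, x̄]` determined by `S`, for every `x` in the box,
`h v_min + ∑ j, (m⁺ j * x̲ j − m⁻ j * x̄ j) ≤ g x ≤ h v_max + ∑ j, (m⁺ j * x̄ j − m⁻ j * x̲ j)`. -/
theorem stmt_4 (n : ℕ) (xl xu : Fin n → ℝ) (hle : xl ≤ xu)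
    (g : (Fin n → ℝ) → ℝ) (U : Set (Fin n → ℝ)) (hU : IsOpen U)
    (hXU : Set.Icc xl xu ⊆ U) (hg : DifferentiableOn ℝ g U)
    (Jl Ju : Fin n → ℝ)
    (hJ : ∀ x ∈ Set.Icc xl xu, ∀ j,
      Jl j ≤ fderiv ℝ g x (Pi.single j 1) ∧ fderiv ℝ g x (Pi.single j 1) ≤ Ju j)
    (m : Fin n → ℝ) (hm : ∀ j, m j = Jl j ∨ m j = Ju j)
    (h : (Fin n → ℝ) → ℝ) (hdef : ∀ x, h x = g x - ∑ j, m j * x j)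
    (vmin vmax : Fin n → ℝ)
    (hvmin : ∀ j, (m j = Jl j → vmin j = xl j) ∧ (¬ m j = Jl j → vmin j = xu j))
    (hvmax : ∀ j, (m j = Jl j → vmax j = xu j) ∧ (¬ m j = Jl j → vmax j = xl j)) :
    ∀ x ∈ Set.Icc xl xu,
      h vmin + (∑ j, (max (m j) 0 * xl j - (max (m j) 0 - m j) * xu j)) ≤ g x ∧
      g x ≤ h vmax + ∑ j, (max (m j) 0 * xu j - (max (m j) 0 - m j) * xl j) := by
  intro x hx
  have hxl : ∀ j, xl j ≤ x j := fun j => hx.1 j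
  have hxu : ∀ j, x j ≤ xu j := fun j => hx.2 j
  have hvminmem : vmin ∈ Set.Icc xl xu := by
    constructor <;> intro j <;>
    · by_cases hc : m j = Jl j
      · rw [(hvmin j).1 hc]; try exact hle j
      · rw [(hvmin j).2 hc]; try exact hle j
  have hvmaxmem : vmax ∈ Set.Icc xl xu := by
    constructor <;> intro j <;>
    · by_cases hc : m j = Jl j
      · rw [(hvmax j).1 hc]; try exact hle j
      · rw [(hvmax j).2 hc]; try exact hle j
  have hlow : h vmin ≤ h x := by
    apply key_mono n xl xu g h U hU hXU hg m hdef vmin x hvminmem hx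
    intro p hp j
    rcases hm j with hc | hc
    · rw [(hvmin j).1 hc]
      exact mul_nonneg (by linarith [hxl j]) (by linarith [(hJ p hp j).1, hc])
    · by_cases hc2 : m j = Jl j
      · rw [(hvmin j).1 hc2]
        exact mul_nonneg (by linarith [hxl j]) (by linarith [(hJ p hp j).1, hc2])
      · rw [(hvmin j).2 hc2]
        have h5 : fderiv ℝ g p (Pi.single j 1) ≤ m j := by rw [hc]; exact (hJ p hp j).2
        nlinarith [mul_nonneg (sub_nonneg.2 (hxu j)) (sub_nonneg.2 h5)]
  have hhigh : h x ≤ h vmax := by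
    apply key_mono n xl xu g h U hU hXU hg m hdef x vmax hx hvmaxmem
    intro p hp j
    rcases hm j with hc | hc
    · rw [(hvmax j).1 hc]
      exact mul_nonneg (by linarith [hxu j]) (by linarith [(hJ p hp j).1, hc])
    · by_cases hc2 : m j = Jl j
      · rw [(hvmax j).1 hc2]
        exact mul_nonneg (by linarith [hxu j]) (by linarith [(hJ p hp j).1, hc2])
      · rw [(hvmax j).2 hc2]
        have h5 : fderiv ℝ g p (Pi.single j 1) ≤ m j := by rw [hc]; exact (hJ p hp j).2
        nlinarith [mul_nonneg (sub_nonneg.2 (hxl j)) (sub_nonneg.2 h5)]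
  have hgx : g x = h x + ∑ j, m j * x j := by rw [hdef]; ring
  have hsuml : ∑ j, (max (m j) 0 * xl j - (max (m j) 0 - m j) * xu j) ≤ ∑ j, m j * x j := by
    apply Finset.sum_le_sum
    intro j _
    have h1 : (0:ℝ) ≤ max (m j) 0 := le_max_right _ _
    have h2 : m j ≤ max (m j) 0 := le_max_left _ _
    nlinarith [hxl j, hxu j]
  have hsumu : ∑ j, m j * x j ≤ ∑ j, (max (m j) 0 * xu j - (max (m j) 0 - m j) * xl j) := by
    apply Finset.sum_le_sum
    intro j _
    have h1 : (0:ℝ) ≤ max (m j) 0 := le_max_right _ _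
    have h2 : m j ≤ max (m j) 0 := le_max_left _ _
    nlinarith [hxl j, hxu j]
  constructor
  · rw [hgx]; linarith
  · rw [hgx]; linarith
end

section
/- (Range containment of the perturbed objective.) Let n ∈ ℕ, let x̲ ≤ x̄ in Fin n → ℝ, let δ ≥ 0, and let f, f' : (Fin n → ℝ) → ℝ satisfy |f' x − f x| ≤ δ for all x ∈ Set.Icc x̲ x̄. Let m, m̃ : Fin n → ℝ and set m̂ = m + m̃. Suppose h̲, h̄ ∈ ℝ satisfy h̲ ≤ f x − ∑ j, m j * x j ≤ h̄ for all x ∈ Set.Icc x̲ x̄. Then for every x ∈ Set.Icc x̲ x̄: −δ + h̲ + ∑ j, (m̂⁺ j * x̲ j − m̂⁻ j * x̄ j) ≤ f' x + ∑ j, m̃ j * x j ≤ δ + h̄ + ∑ j, (m̂⁺ j * x̄ j − m̂⁻ j * x̲ j). -/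
lemma term_bounds (a l u x : ℝ) (h1 : l ≤ x) (h2 : x ≤ u) :
    max a 0 * l - (max a 0 - a) * u ≤ a * x ∧
    a * x ≤ max a 0 * u - (max a 0 - a) * l := by
  have hp : 0 ≤ max a 0 := le_max_right _ _
  have hn : 0 ≤ max a 0 - a := by simp [sub_nonneg, le_max_left]
  constructor
  · have := mul_le_mul_of_nonneg_left h1 hp
    have := mul_le_mul_of_nonneg_left h2 hn
    nlinarith
  · have := mul_le_mul_of_nonneg_left h2 hp
    have := mul_le_mul_of_nonneg_left h1 hn
    nlinarith

/-- Range containment of the perturbed objective: if `|f' x − f x| ≤ δ` on the box,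
`m̂ = m + m̃`, and `h̲ ≤ f x − ∑ j, m j * x j ≤ h̄` on the box, then for every `x` in
the box, `−δ + h̲ + ∑ j, (m̂⁺ j * x̲ j − m̂⁻ j * x̄ j) ≤ f' x + ∑ j, m̃ j * x j ≤
δ + h̄ + ∑ j, (m̂⁺ j * x̄ j − m̂⁻ j * x̲ j)`. -/
theorem stmt_5 (n : ℕ) (xl xu : Fin n → ℝ) (hle : xl ≤ xu)
    (δ : ℝ) (hδ : 0 ≤ δ)
    (f f' : (Fin n → ℝ) → ℝ)
    (hadj : ∀ x ∈ Set.Icc xl xu, |f' x - f x| ≤ δ)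
    (m mt mh : Fin n → ℝ) (hmh : mh = m + mt)
    (hl hu : ℝ)
    (hbound : ∀ x ∈ Set.Icc xl xu,
      hl ≤ f x - ∑ j, m j * x j ∧ f x - ∑ j, m j * x j ≤ hu) :
    ∀ x ∈ Set.Icc xl xu,
      -δ + hl + (∑ j, (max (mh j) 0 * xl j - (max (mh j) 0 - mh j) * xu j)) ≤
        f' x + ∑ j, mt j * x j ∧
      f' x + ∑ j, mt j * x j ≤
        δ + hu + ∑ j, (max (mh j) 0 * xu j - (max (mh j) 0 - mh j) * xl j) := by
  intro x hx
  obtain ⟨hxl, hxu⟩ := hx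
  have hadj' := abs_le.mp (hadj x ⟨hxl, hxu⟩)
  obtain ⟨hb1, hb2⟩ := hbound x ⟨hxl, hxu⟩
  have hdecomp : f' x + ∑ j, mt j * x j =
      (f' x - f x) + (f x - ∑ j, m j * x j) + ∑ j, mh j * x j := by
    have : ∑ j, mh j * x j = ∑ j, m j * x j + ∑ j, mt j * x j := by
      rw [← Finset.sum_add_distrib]
      exact Finset.sum_congr rfl fun j _ => by simp [hmh]; ring
    rw [this]; ring
  have hsl : ∑ j, (max (mh j) 0 * xl j - (max (mh j) 0 - mh j) * xu j) ≤
      ∑ j, mh j * x j :=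
    Finset.sum_le_sum fun j _ => (term_bounds (mh j) (xl j) (xu j) (x j) (hxl j) (hxu j)).1
  have hsu : ∑ j, mh j * x j ≤
      ∑ j, (max (mh j) 0 * xu j - (max (mh j) 0 - mh j) * xl j) :=
    Finset.sum_le_sum fun j _ => (term_bounds (mh j) (xl j) (xu j) (x j) (hxl j) (hxu j)).2
  constructor <;> rw [hdecomp] <;> linarith [hadj'.1, hadj'.2]
end

section
/- (Guaranteed privacy of the functional-perturbation mechanism, per agent.) Let n ∈ ℕ, let x̲ ≤ x̄ in Fin n → ℝ with the box X₀ = Set.Icc x̲ x̄ nonempty, let δ > 0, and let f, f' : (Fin n → ℝ) → ℝ be continuous functions with |f' x − f x| ≤ δ for all x ∈ X₀. Let m, m̃ : Fin n → ℝ and set m̂ = m + m̃. Define h x = f x − ∑ j, m j * x j and h' x = f' x − ∑ j, m j * x j; let h̲ = sInf (h '' X₀), h̄ = sSup (h '' X₀), h̲' = sInf (h' '' X₀), h̄' = sSup (h' '' X₀). Define the intervals M(f) = Set.Icc (h̲ + ∑ j, (m̂⁺ j * x̲ j − m̂⁻ j * x̄ j)) (h̄ + ∑ j, (m̂⁺ j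 * x̄ j − m̂⁻ j * x̲ j)) and M(f') = Set.Icc (h̲' + ∑ j, (m̂⁺ j * x̲ j − m̂⁻ j * x̄ j)) (h̄' + ∑ j, (m̂⁺ j * x̄ j − m̂⁻ j * x̲ j)). Let D = (h̄ − h̲) + ∑ j, |m̂ j| * (x̄ j − x̲ j), assume D > 0, and set ε = Real.log ((D + 2δ)/D) / δ. Then for every a ≤ b in ℝ, Metric.diam (M(f') ∩ Set.Icc a b) ≤ Real.exp (ε * δ) * Metric.diam (M(f)). -/
/-!
Write `M(f) = [h̲ + L, h̄ + U]`, where `L`, `U` are the extreme values of `x ↦ ∑ j, m̂ j * x j`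
on the box, so that `U - L = ∑ j, |m̂ j| * (x̄ j - x̲ j)` and `diam M(f) = D`. Since `h' - h = f' - f`
is bounded by `δ` on the box, `h̄' ≤ h̄ + δ` and `h̲' ≥ h̲ - δ`, hence
`diam (M(f') ∩ [a, b]) ≤ diam M(f') ≤ D + 2δ = exp (ε δ) * D`.
-/

open Set

lemma max_zero_mul_sub_sub_max_zero_mul_sub (a l u : ℝ) :
    (max a 0 * u - (max a 0 - a) * l) - (max a 0 * l - (max a 0 - a) * u) = |a| * (u - l) := by
  rcases le_total 0 a with ha | ha
  · rw [abs_of_nonneg ha, max_eq_left ha]; ring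
  · rw [abs_of_nonpos ha, max_eq_right ha]; ring

lemma sum_max_zero_mul_sub_sub_sum_max_zero_mul_sub {ι : Type*} (s : Finset ι) (a l u : ι → ℝ) :
    ∑ j ∈ s, (max (a j) 0 * u j - (max (a j) 0 - a j) * l j) -
        ∑ j ∈ s, (max (a j) 0 * l j - (max (a j) 0 - a j) * u j) =
      ∑ j ∈ s, |a j| * (u j - l j) := by
  rw [← Finset.sum_sub_distrib]
  exact Finset.sum_congr rfl fun j _ => max_zero_mul_sub_sub_max_zero_mul_sub (a j) (l j) (u j)

lemma csSup_image_sub_csInf_image_le {α : Type*} {s : Set α} {g g' : α → ℝ} {δ : ℝ}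
    (hs : s.Nonempty) (hbdd : BddAbove (g '' s)) (hbdd' : BddBelow (g '' s))
    (hclose : ∀ x ∈ s, |g' x - g x| ≤ δ) :
    sSup (g' '' s) - sInf (g' '' s) ≤ sSup (g '' s) - sInf (g '' s) + 2 * δ := by
  have hsup : sSup (g' '' s) ≤ sSup (g '' s) + δ := by
    refine csSup_le (hs.image g') ?_
    rintro _ ⟨x, hx, rfl⟩
    linarith [(abs_le.1 (hclose x hx)).2, le_csSup hbdd (mem_image_of_mem g hx)]
  have hinf : sInf (g '' s) - δ ≤ sInf (g' '' s) := by
    refine le_csInf (hs.image g') ?_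
    rintro _ ⟨x, hx, rfl⟩
    linarith [(abs_le.1 (hclose x hx)).1, csInf_le hbdd' (mem_image_of_mem g hx)]
  linarith

lemma Real.diam_Icc_le_of_sub_le {l u c : ℝ} (h : u - l ≤ c) (hc : 0 ≤ c) :
    Metric.diam (Icc l u) ≤ c := by
  rcases le_or_gt l u with hlu | hlu
  · rwa [Real.diam_Icc hlu]
  · rwa [Icc_eq_empty hlu.not_ge, Metric.diam_empty]

theorem stmt_6_general (n : ℕ) (xl xu : Fin n → ℝ)
    (hne : (Set.Icc xl xu).Nonempty)
    (δ : ℝ) (hδ : 0 < δ)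
    (f f' : (Fin n → ℝ) → ℝ) (hf : Continuous f)
    (hadj : ∀ x ∈ Set.Icc xl xu, |f' x - f x| ≤ δ)
    (m mh : Fin n → ℝ)
    (h h' : (Fin n → ℝ) → ℝ)
    (hdef : ∀ x, h x = f x - ∑ j, m j * x j)
    (hdef' : ∀ x, h' x = f' x - ∑ j, m j * x j)
    (hl hu hl' hu' : ℝ)
    (hhl : hl = sInf (h '' Set.Icc xl xu)) (hhu : hu = sSup (h '' Set.Icc xl xu))
    (hhl' : hl' = sInf (h' '' Set.Icc xl xu)) (hhu' : hu' = sSup (h' '' Set.Icc xl xu))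
    (D : ℝ) (hD : D = (hu - hl) + ∑ j, |mh j| * (xu j - xl j)) (hDpos : 0 < D)
    (ε : ℝ) (hε : ε = Real.log ((D + 2 * δ) / D) / δ) :
    ∀ a b : ℝ, a ≤ b →
      Metric.diam
        (Set.Icc (hl' + ∑ j, (max (mh j) 0 * xl j - (max (mh j) 0 - mh j) * xu j))
                 (hu' + ∑ j, (max (mh j) 0 * xu j - (max (mh j) 0 - mh j) * xl j)) ∩
          Set.Icc a b) ≤
      Real.exp (ε * δ) *
        Metric.diam
          (Set.Icc (hl + ∑ j, (max (mh j) 0 * xl j - (max (mh j) 0 - mh j) * xu j))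
                   (hu + ∑ j, (max (mh j) 0 * xu j - (max (mh j) 0 - mh j) * xl j))) := by
  intro a b _
  have hwidth := sum_max_zero_mul_sub_sub_sum_max_zero_mul_sub Finset.univ mh xl xu
  have hcont : Continuous h := funext hdef ▸ by fun_prop
  have himage := (isCompact_Icc (a := xl) (b := xu)).image hcont
  have hosc : hu' - hl' ≤ hu - hl + 2 * δ := by
    subst hhl hhu hhl' hhu'
    refine csSup_image_sub_csInf_image_le hne himage.bddAbove himage.bddBelow fun x hx => ?_
    rw [hdef, hdef', sub_sub_sub_cancel_right]
    exact hadj x hx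
  have hexp : Real.exp (ε * δ) = (D + 2 * δ) / D := by
    rw [hε, div_mul_cancel₀ _ hδ.ne', Real.exp_log (div_pos (by linarith) hDpos)]
  rw [Real.diam_Icc (by linarith), hexp]
  calc _ ≤ D + 2 * δ :=
        (Metric.diam_mono inter_subset_left (Metric.isBounded_Icc _ _)).trans
          (Real.diam_Icc_le_of_sub_le (by linarith) (by linarith))
    _ = (D + 2 * δ) / D * ((hu + _) - (hl + _)) := by
        rw [add_sub_add_comm, hwidth, ← hD, div_mul_cancel₀ _ hDpos.ne']

/-- Guaranteed privacy of the functional-perturbation mechanism, per agent: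
with the interval over-approximations `M(f)`, `M(f')` of the ranges of the perturbed
objectives constructed from the decompositions `f x = h x + ∑ j, m j * x j`,
`D = (h̄ − h̲) + ∑ j, |m̂ j| * (x̄ j − x̲ j) > 0` and `ε = log((D + 2δ)/D)/δ`,
for every interval `[a, b]`,
`diam (M(f') ∩ [a,b]) ≤ exp (ε * δ) * diam (M(f))`. -/
theorem stmt_6 (n : ℕ) (xl xu : Fin n → ℝ) (hle : xl ≤ xu)
    (hne : (Set.Icc xl xu).Nonempty)
    (δ : ℝ) (hδ : 0 < δ)
    (f f' : (Fin n → ℝ) → ℝ) (hf : Continuous f) (hf' : Continuous f')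
    (hadj : ∀ x ∈ Set.Icc xl xu, |f' x - f x| ≤ δ)
    (m mt mh : Fin n → ℝ) (hmh : mh = m + mt)
    (h h' : (Fin n → ℝ) → ℝ)
    (hdef : ∀ x, h x = f x - ∑ j, m j * x j)
    (hdef' : ∀ x, h' x = f' x - ∑ j, m j * x j)
    (hl hu hl' hu' : ℝ)
    (hhl : hl = sInf (h '' Set.Icc xl xu)) (hhu : hu = sSup (h '' Set.Icc xl xu))
    (hhl' : hl' = sInf (h' '' Set.Icc xl xu)) (hhu' : hu' = sSup (h' '' Set.Icc xl xu))
    (D : ℝ) (hD : D = (hu - hl) + ∑ j, |mh j| * (xu j - xl j)) (hDpos : 0 < D)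
    (ε : ℝ) (hε : ε = Real.log ((D + 2 * δ) / D) / δ) :
    ∀ a b : ℝ, a ≤ b →
      Metric.diam
        (Set.Icc (hl' + ∑ j, (max (mh j) 0 * xl j - (max (mh j) 0 - mh j) * xu j))
                 (hu' + ∑ j, (max (mh j) 0 * xu j - (max (mh j) 0 - mh j) * xl j)) ∩
          Set.Icc a b) ≤
      Real.exp (ε * δ) *
        Metric.diam
          (Set.Icc (hl + ∑ j, (max (mh j) 0 * xl j - (max (mh j) 0 - mh j) * xu j))
                   (hu + ∑ j, (max (mh j) 0 * xu j - (max (mh j) 0 - mh j) * xl j))) :=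
  stmt_6_general n xl xu hne δ hδ f f' hf hadj m mh h h' hdef hdef' hl hu hl' hu' hhl hhu hhl' hhu'
    D hD hDpos ε hε
end

section
/- (Perturbed objective stays in the δ*-vicinity.) Let n ∈ ℕ, let x̲ ≤ x̄ in Fin n → ℝ, let m̃ : Fin n → ℝ, and define δ* = max (|∑ j, (m̃⁺ j * x̄ j − m̃⁻ j * x̲ j)|) (|∑ j, (m̃⁺ j * x̲ j − m̃⁻ j * x̄ j)|). Then for every x ∈ Set.Icc x̲ x̄, |∑ j, m̃ j * x j| ≤ δ*. Consequently, for any f : (Fin n → ℝ) → ℝ, the perturbed function g x = f x + ∑ j, m̃ j * x j satisfies |g x − f x| ≤ δ* for all x ∈ Set.Icc x̲ x̄. -/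
/-- Perturbed objective stays in the `δ*`-vicinity: with
`δ* = max |∑ j, (m̃⁺ j * x̄ j − m̃⁻ j * x̲ j)| |∑ j, (m̃⁺ j * x̲ j − m̃⁻ j * x̄ j)|`,
for every `x` in the box `|∑ j, m̃ j * x j| ≤ δ*`, and hence the perturbed function
`g x = f x + ∑ j, m̃ j * x j` satisfies `|g x − f x| ≤ δ*` on the box. -/
theorem stmt_10 (n : ℕ) (xl xu : Fin n → ℝ) (hle : xl ≤ xu)
    (mt : Fin n → ℝ) (δs : ℝ)
    (hδs : δs = max |∑ j, (max (mt j) 0 * xu j - (max (mt j) 0 - mt j) * xl j)|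
                    |∑ j, (max (mt j) 0 * xl j - (max (mt j) 0 - mt j) * xu j)|) :
    (∀ x ∈ Set.Icc xl xu, |∑ j, mt j * x j| ≤ δs) ∧
    ∀ f : (Fin n → ℝ) → ℝ, ∀ x ∈ Set.Icc xl xu,
      |(f x + ∑ j, mt j * x j) - f x| ≤ δs := by
  have key : ∀ x ∈ Set.Icc xl xu, |∑ j, mt j * x j| ≤ δs := by
    intro x hx
    obtain ⟨h1, h2⟩ := hx
    have hub : ∑ j, mt j * x j ≤ ∑ j, (max (mt j) 0 * xu j - (max (mt j) 0 - mt j) * xl j) := by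
      apply Finset.sum_le_sum
      intro j _
      have hp : 0 ≤ max (mt j) 0 := le_max_right _ _
      have hm : 0 ≤ max (mt j) 0 - mt j := by simp [le_max_left]
      have e : mt j * x j = max (mt j) 0 * x j - (max (mt j) 0 - mt j) * x j := by ring
      rw [e]
      have := mul_le_mul_of_nonneg_left (h2 j) hp
      have := mul_le_mul_of_nonneg_left (h1 j) hm
      linarith
    have hlb : ∑ j, (max (mt j) 0 * xl j - (max (mt j) 0 - mt j) * xu j) ≤ ∑ j, mt j * x j := by
      apply Finset.sum_le_sum
      intro j _
      have hp : 0 ≤ max (mt j) 0 := le_max_right _ _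
      have hm : 0 ≤ max (mt j) 0 - mt j := by simp [le_max_left]
      have e : mt j * x j = max (mt j) 0 * x j - (max (mt j) 0 - mt j) * x j := by ring
      rw [e]
      have := mul_le_mul_of_nonneg_left (h1 j) hp
      have := mul_le_mul_of_nonneg_left (h2 j) hm
      linarith
    rw [hδs, abs_le]
    constructor
    · have := neg_abs_le (∑ j, (max (mt j) 0 * xl j - (max (mt j) 0 - mt j) * xu j))
      have h := le_max_right |∑ j, (max (mt j) 0 * xu j - (max (mt j) 0 - mt j) * xl j)|
        |∑ j, (max (mt j) 0 * xl j - (max (mt j) 0 - mt j) * xu j)|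
      linarith
    · have := le_abs_self (∑ j, (max (mt j) 0 * xu j - (max (mt j) 0 - mt j) * xl j))
      have h := le_max_left |∑ j, (max (mt j) 0 * xu j - (max (mt j) 0 - mt j) * xl j)|
        |∑ j, (max (mt j) 0 * xl j - (max (mt j) 0 - mt j) * xu j)|
      linarith
  exact ⟨key, fun f x hx => by simpa using key x hx⟩
end

section
/- (Algorithm-independent accuracy error bound.) Let n ∈ ℕ, let x̲ ≤ x̄ in Fin n → ℝ, let X₀ = Set.Icc x̲ x̄, let f : (Fin n → ℝ) → ℝ, let m̃ : Fin n → ℝ, and define g x = f x + ∑ j, m̃ j * x j. Suppose x* ∈ X₀ satisfies f x* ≤ f x for all x ∈ X₀, and x̃* ∈ X₀ satisfies g x̃* ≤ g x for all x ∈ X₀. Then ‖x* − x̃*‖∞ ≤ sSup { r : ℝ | ∃ y ∈ X₀, ∃ z ∈ X₀, r = ‖y − z‖∞ ∧ ∑ j, m̃ j * (y j − z j) ≤ 0 }, where ‖v‖∞ denotes the sup norm max over j of |v j| (and the supremum on the right is finite, being bounded above by ‖x̄ − x̲‖∞). -/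
/-- Algorithm-independent accuracy error bound: if `x*` minimizes `f` over the box
`X₀ = [x̲, x̄]` and `x̃*` minimizes the perturbed objective
`g x = f x + ∑ j, m̃ j * x j` over `X₀`, then the accuracy error `‖x* − x̃*‖∞` is at
most the optimal value of the robust upper-bound program
`sSup { r | ∃ y ∈ X₀, ∃ z ∈ X₀, r = ‖y − z‖∞ ∧ ∑ j, m̃ j * (y j − z j) ≤ 0 }`.
Here `‖·‖` on `Fin n → ℝ` is the sup norm. -/
theorem stmt_12 (n : ℕ) (xl xu : Fin n → ℝ) (hle : xl ≤ xu)
    (f : (Fin n → ℝ) → ℝ) (mt : Fin n → ℝ)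
    (g : (Fin n → ℝ) → ℝ) (hg : ∀ x, g x = f x + ∑ j, mt j * x j)
    (xs xts : Fin n → ℝ) (hxs : xs ∈ Set.Icc xl xu) (hxts : xts ∈ Set.Icc xl xu)
    (hmin : ∀ x ∈ Set.Icc xl xu, f xs ≤ f x)
    (hmin' : ∀ x ∈ Set.Icc xl xu, g xts ≤ g x) :
    ‖xs - xts‖ ≤
      sSup { r : ℝ | ∃ y ∈ Set.Icc xl xu, ∃ z ∈ Set.Icc xl xu,
        r = ‖y - z‖ ∧ ∑ j, mt j * (y j - z j) ≤ 0 } := by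
  have hbdd : BddAbove { r : ℝ | ∃ y ∈ Set.Icc xl xu, ∃ z ∈ Set.Icc xl xu,
      r = ‖y - z‖ ∧ ∑ j, mt j * (y j - z j) ≤ 0 } := by
    refine ⟨‖xu - xl‖, ?_⟩
    rintro r ⟨y, hy, z, hz, rfl, -⟩
    have h0 : (0 : ℝ) ≤ ‖xu - xl‖ := norm_nonneg _
    rw [pi_norm_le_iff_of_nonneg h0]
    intro j
    have h1 : |y j - z j| ≤ xu j - xl j := by
      have := hy.1 j; have := hy.2 j; have := hz.1 j; have := hz.2 j
      rw [abs_sub_le_iff]; constructor <;> linarith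
    calc ‖(y - z) j‖ = |y j - z j| := rfl
      _ ≤ xu j - xl j := h1
      _ ≤ |xu j - xl j| := le_abs_self _
      _ = ‖(xu - xl) j‖ := rfl
      _ ≤ ‖xu - xl‖ := norm_le_pi_norm _ j
  have hS : ∑ j, mt j * (xts j - xs j) ≤ 0 := by
    have h1 := hmin xts hxts
    have h2 := hmin' xs hxs
    rw [hg, hg] at h2
    have : ∑ j, mt j * (xts j - xs j) = (∑ j, mt j * xts j) - ∑ j, mt j * xs j := by
      rw [← Finset.sum_sub_distrib]; congr 1; ext j; ring
    linarith
  have hmem : ‖xts - xs‖ ∈ { r : ℝ | ∃ y ∈ Set.Icc xl xu, ∃ z ∈ Set.Icc xl xu,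
      r = ‖y - z‖ ∧ ∑ j, mt j * (y j - z j) ≤ 0 } :=
    ⟨xts, hxts, xs, hxs, rfl, hS⟩
  rw [norm_sub_rev]
  exact le_csSup hbdd hmem
end
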